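/- arXiv:1705.02957 — 5 statements merged into one kernel-verified Lean document; each statement's English description precedes it below -/
import Mathlib

section
/- Fix N users and K = N REs with channel gains satisfying |h_{m,n,k}| > 0 for all m, n, k, powers P_n > 0 and noise N0 > 0, and suppose the strong interference condition holds. Then a strategy profile a ∈ {1,…,K}^N is a pure Nash equilibrium of the Naive-FSIG if and only if a is a bijection from users to REs (a perfect matching of users to REs); in particular the set of pure Nash equilibria of the Naive-FSIG has cardinality exactly N!. -/
/-!
If two users share an RE, then some RE is left empty, and the strong interference condition says
precisely that a user suffering the interference of even one other user on its RE gets a lower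
rate than it would get alone on any other RE. So a profile with a shared RE is not an
equilibrium, while in a perfect matching every deviation moves a user from an RE it has to
itself onto an occupied one, which lowers its rate.
-/

open MeasureTheory ProbabilityTheory Filter

/-- The cumulative distribution function of a real random variable `X` under `μ`. -/
noncomputable def cdfOf {Ω : Type*} [MeasurableSpace Ω] (μ : Measure Ω) (X : Ω → ℝ) : ℝ → ℝ :=
  fun x => (μ {ω | X ω ≤ x}).toReal

/-- `orderStat v j` is the `j`-th smallest value (1-indexed) among `v 0, …, v (K-1)`. -/
noncomputable def orderStat {K : ℕ} (v : Fin K → ℝ) (j : ℕ) : ℝ :=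
  ((Finset.univ.val.map v).sort (· ≤ ·)).getD (j - 1) 0

/-- A finite family of random variables is `m`-dependent: every subfamily whose indices are
pairwise more than `m` apart is jointly independent. -/
def MDepFam {Ω β : Type*} [MeasurableSpace Ω] [MeasurableSpace β] (μ : Measure Ω) (m : ℕ)
    {K : ℕ} (X : Fin K → Ω → β) : Prop :=
  ∀ S : Finset (Fin K),
    (∀ i ∈ S, ∀ j ∈ S, i ≠ j → (m : ℤ) < |(i : ℤ) - (j : ℤ)|) →
    iIndepFun (fun i : S => X i.1) μ

/-- `F` has an exponentially-dominated tail with parameters `(α, β, lam, γ)`: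
`(1 - F x)/(α x^β e^{-lam x^γ}) → 1` as `x → ∞`. -/
def ExpDomTail (F : ℝ → ℝ) (α β lam γ : ℝ) : Prop :=
  Tendsto (fun x : ℝ => (1 - F x) / (α * x ^ β * Real.exp (-lam * x ^ γ))) atTop (nhds 1)

/-- Interference experienced by user `n` on RE `k` under the profile `a`. -/
noncomputable def interf {N : ℕ} (h : Fin N → Fin N → Fin N → ℂ) (P : Fin N → ℝ)
    (a : Fin N → Fin N) (n k : Fin N) : ℝ :=
  ∑ m ∈ Finset.univ.filter (fun m => m ≠ n ∧ a m = k), ‖h m n k‖ ^ 2 * P m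

/-- Achievable rate of user `n` under the profile `a`, treating interference as noise. -/
noncomputable def rate {N : ℕ} (h : Fin N → Fin N → Fin N → ℂ) (P : Fin N → ℝ) (N0 : ℝ)
    (a : Fin N → Fin N) (n : Fin N) : ℝ :=
  Real.logb 2 (1 + P n * ‖h n n (a n)‖ ^ 2 / (N0 + interf h P a n (a n)))

/-- Pure Nash equilibrium of the game with utilities `u` (utility of user `n` at profile `a`
is `u a n`). -/
def IsPNE {N : ℕ} (u : (Fin N → Fin N) → Fin N → ℝ) (a : Fin N → Fin N) : Prop :=
  ∀ n k, u (Function.update a n k) n ≤ u a n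

/-- The M-FSIG utility of user `n` at profile `a`. -/
noncomputable def mfsigUtil {N : ℕ} (h : Fin N → Fin N → Fin N → ℂ) (P : Fin N → ℝ)
    (N0 : ℝ) (M : ℕ) (a : Fin N → Fin N) (n : Fin N) : ℝ :=
  if orderStat (fun k => ‖h n n k‖) (N - M + 1) ≤ ‖h n n (a n)‖ then
    Real.logb 2 (1 + P n * orderStat (fun k => ‖h n n k‖) (N - M + 1) ^ 2 /
      (N0 + interf h P a n (a n)))
  else 0

/-- Weighted sum-rate `W(a) = ∑ n, w n * R n (a)`. -/
noncomputable def wsum {N : ℕ} (h : Fin N → Fin N → Fin N → ℂ) (P : Fin N → ℝ) (N0 : ℝ)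
    (w : Fin N → ℝ) (a : Fin N → Fin N) : ℝ :=
  ∑ n, w n * rate h P N0 a n

/-- Number of sharing users of a profile `a`. -/
noncomputable def numSharing {N : ℕ} (a : Fin N → Fin N) : ℕ :=
  (Finset.univ.filter fun n => ∃ m, m ≠ n ∧ a m = a n).card

open Function

/- The strong interference condition in the form it is used: with `A = |h_{n,n,l}|²`,
`B = |h_{n,n,k}|²`, `c = |h_{m,n,l}|²` and `p = P_m`, user `n` sharing RE `l` with user `m`
has a lower SINR than alone on RE `k`. -/
lemma div_add_lt_div_of_mul_le {A B c p N0 I : ℝ} (hB : 0 < B) (hc : 0 < c) (hN0 : 0 < N0)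
    (hI : 0 ≤ I) (hpc : p * c ≤ I) (hcond : 1 / c * (A / B - 1) < p / N0) :
    A / (N0 + I) < B / N0 := by
  have hAB : A / B - 1 < p * c / N0 := by
    rwa [one_div_mul_eq_div, div_lt_iff₀ hc, div_mul_eq_mul_div] at hcond
  have hAB' : A / B < (N0 + I) / N0 := by
    rw [add_div, div_self hN0.ne']
    linarith [div_le_div_of_nonneg_right hpc hN0.le]
  rw [div_lt_div_iff₀ hB hN0] at hAB'
  rw [div_lt_div_iff₀ (by linarith) hN0]
  linarith

section Interference

variable {N : ℕ} (h : Fin N → Fin N → Fin N → ℂ) {P : Fin N → ℝ}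

lemma interf_nonneg (hP : ∀ m, 0 ≤ P m) (a : Fin N → Fin N) (n k : Fin N) :
    0 ≤ interf h P a n k :=
  Finset.sum_nonneg fun m _ => mul_nonneg (by positivity) (hP m)

lemma interf_eq_zero_of_forall_ne {a : Fin N → Fin N} {n k : Fin N} (hk : ∀ m ≠ n, a m ≠ k) :
    interf h P a n k = 0 :=
  Finset.sum_eq_zero fun m hm => by
    simp only [Finset.mem_filter, Finset.mem_univ, true_and] at hm
    exact absurd hm.2 (hk m hm.1)

lemma mul_le_interf (hP : ∀ m, 0 ≤ P m) (a : Fin N → Fin N) {m n : Fin N} (hmn : m ≠ n) :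
    ‖h m n (a m)‖ ^ 2 * P m ≤ interf h P a n (a m) :=
  Finset.single_le_sum (f := fun x => ‖h x n (a m)‖ ^ 2 * P x)
    (fun x _ => mul_nonneg (by positivity) (hP x)) (by simp [hmn])

end Interference

section StrongInterference

variable {N : ℕ} {h : Fin N → Fin N → Fin N → ℂ} {P : Fin N → ℝ} {N0 : ℝ}
  (hh : ∀ m n k, 0 < ‖h m n k‖) (hP : ∀ n, 0 < P n) (hN0 : 0 < N0)
  (hstrong : ∀ m l n k, (1 / ‖h m n l‖ ^ 2) *
    (‖h n n l‖ ^ 2 / ‖h n n k‖ ^ 2 - 1) < P m / N0)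
include hh hP hN0 hstrong

theorem rate_lt_rate_of_shared_of_alone {a b : Fin N → Fin N} {m n : Fin N} (hmn : m ≠ n)
    (hshared : a m = a n) (halone : ∀ x ≠ n, b x ≠ b n) :
    rate h P N0 a n < rate h P N0 b n := by
  have hP' : ∀ x, 0 ≤ P x := fun x => (hP x).le
  have hsinr : ‖h n n (a n)‖ ^ 2 / (N0 + interf h P a n (a n)) <
      ‖h n n (b n)‖ ^ 2 / (N0 + interf h P b n (b n)) := by
    rw [interf_eq_zero_of_forall_ne h halone, add_zero]
    refine div_add_lt_div_of_mul_le (pow_pos (hh n n (b n)) 2) (pow_pos (hh m n (a n)) 2) hN0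
      (interf_nonneg h hP' a n (a n)) ?_ (hstrong m (a n) n (b n))
    simpa only [hshared, mul_comm] using mul_le_interf h hP' a hmn
  have hpos : 0 ≤ P n * ‖h n n (a n)‖ ^ 2 / (N0 + interf h P a n (a n)) :=
    div_nonneg (mul_nonneg (hP' n) (by positivity)) (by linarith [interf_nonneg h hP' a n (a n)])
  refine Real.logb_lt_logb one_lt_two (by linarith) ?_
  rw [mul_div_assoc, mul_div_assoc]
  gcongr
  exact hP n

theorem injective_of_isPNE {a : Fin N → Fin N} (ha : IsPNE (rate h P N0) a) : Injective a := by
  by_contra hinj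
  obtain ⟨m, n, hshared, hmn⟩ : ∃ m n, a m = a n ∧ m ≠ n := by
    simpa [Injective, not_forall] using hinj
  obtain ⟨k, hk⟩ : ∃ k, ∀ x, a x ≠ k := by
    simpa [Surjective, not_forall, eq_comm] using mt Finite.injective_iff_surjective.mpr hinj
  refine (ha n k).not_gt (rate_lt_rate_of_shared_of_alone hh hP hN0 hstrong hmn hshared ?_)
  intro x hx
  simpa [update_of_ne hx] using hk x

theorem isPNE_of_bijective {a : Fin N → Fin N} (ha : Bijective a) : IsPNE (rate h P N0) a := by
  intro n k
  obtain rfl | hk := eq_or_ne k (a n)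
  · rw [update_eq_self]
  obtain ⟨m, rfl⟩ := ha.2 k
  have hmn : m ≠ n := by
    rintro rfl
    exact hk rfl
  refine (rate_lt_rate_of_shared_of_alone hh hP hN0 hstrong (a := update a n (a m)) hmn ?_
    fun x hx => ha.1.ne hx).le
  simp [update_of_ne hmn]

end StrongInterference

/-- Under the strong interference condition, the pure Nash equilibria of the
Naive-FSIG are exactly the bijections from users to REs, and there are exactly `N !` of them. -/
theorem stmt_2 {N : ℕ} (h : Fin N → Fin N → Fin N → ℂ) (P : Fin N → ℝ) (N0 : ℝ)
    (hh : ∀ m n k, 0 < ‖h m n k‖) (hP : ∀ n, 0 < P n) (hN0 : 0 < N0)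
    (hstrong : ∀ m l n k, (1 / ‖h m n l‖ ^ 2) *
        (‖h n n l‖ ^ 2 / ‖h n n k‖ ^ 2 - 1) < P m / N0) :
    (∀ a : Fin N → Fin N, IsPNE (fun b n => rate h P N0 b n) a ↔ Function.Bijective a) ∧
    Nat.card {a : Fin N → Fin N // IsPNE (fun b n => rate h P N0 b n) a} = Nat.factorial N := by
  have hPNE : ∀ a : Fin N → Fin N, IsPNE (rate h P N0) a ↔ Bijective a := fun a =>
    ⟨fun ha => (injective_of_isPNE hh hP hN0 hstrong ha).bijective_of_finite,
      isPNE_of_bijective hh hP hN0 hstrong⟩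
  refine ⟨hPNE, ?_⟩
  rw [Nat.card_congr ((Equiv.subtypeEquivRight hPNE).trans Equiv.bijectiveEquiv),
    ← Equiv.Perm, Nat.card_perm, Nat.card_fin]
end

section
/- For each N, let X_{n,k} (1 ≤ n, k ≤ N) be positive random variables such that, for each n, the row X_{n,1},…,X_{n,N} is i.i.d. with a continuous CDF F_n satisfying F_n(x) > 0 for all x > 0, and suppose additionally that inf_n F_n(ε) > 0 for every ε > 0. Let M_N be a sequence of positive integers with M_N/N → 0. Then for every sequence m_N of integers with 1 ≤ m_N ≤ M_N, the random variable max_{1≤n≤N} X_{n,(m_N)} converges to 0 in probability as N → ∞. -/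
open MeasureTheory ProbabilityTheory Filter

/-!
A row whose `m`-th smallest entry exceeds `ε` has at most `m - 1` entries `≤ ε`, while each
entry is `≤ ε` with probability at least some `c > 0`, uniformly in the row. A Chernoff bound
(exponential moment at `t = -1`) makes this event have probability at most
`exp (m - (1 - e⁻¹) c N)`; a union bound over the `N` rows costs a factor `N`, and
`N exp (M_N - (1 - e⁻¹) c N) → 0` because `M_N = o(N)`.
-/

open Finset Real

theorem card_filter_le_le_of_lt_orderStat {K : ℕ} (v : Fin K → ℝ) {ε : ℝ} {m : ℕ}
    (h : ε < orderStat v m) : #{k | v k ≤ ε} ≤ m - 1 := by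
  set L := (univ.val.map v).sort (· ≤ ·)
  have hsorted : L.Pairwise (· ≤ ·) := Multiset.pairwise_sort _ _
  have hcard : #{k | v k ≤ ε} = L.countP (· ≤ ε) := by
    rw [← Multiset.coe_countP, Multiset.sort_eq, Multiset.countP_map]
    rfl
  have hdrop : (L.drop (m - 1)).countP (· ≤ ε) = 0 := by
    refine List.countP_eq_zero.mpr fun x hx => ?_
    obtain ⟨j, hj, rfl⟩ := List.mem_iff_getElem.mp hx
    rw [List.length_drop] at hj
    have hlt : m - 1 < L.length := by omega
    have hle : L[m - 1] ≤ L[m - 1 + j] :=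
      hsorted.rel_get_of_le (a := ⟨m - 1, hlt⟩) (b := ⟨m - 1 + j, by omega⟩)
        (by simp [Fin.le_def])
    have hval : orderStat v m = L[m - 1] := List.getD_eq_getElem L 0 hlt
    simpa [List.getElem_drop] using (h.trans_eq hval).trans_le hle
  calc #{k | v k ≤ ε} = (L.take (m - 1)).countP (· ≤ ε) := by
        rw [hcard, ← List.take_append_drop (m - 1) L, List.countP_append, hdrop, add_zero,
          List.take_append_drop]
    _ ≤ m - 1 := List.countP_le_length.trans (List.length_take_le _ _)

section Chernoff

variable {Ω ι : Type*} [MeasurableSpace Ω] {μ : Measure Ω}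

theorem mgf_indicator_one [IsProbabilityMeasure μ] {A : Set Ω} (hA : MeasurableSet A) (t : ℝ) :
    mgf (A.indicator 1) μ t = 1 + (exp t - 1) * μ.real A := by
  have h : (fun ω => exp (t * A.indicator 1 ω))
      = fun ω => A.indicator (fun _ => exp t - 1) ω + 1 := by
    ext ω
    by_cases hω : ω ∈ A <;> simp [hω]
  rw [mgf, h, integral_add ((integrable_const _).indicator hA) (integrable_const 1),
    integral_indicator_const _ hA, integral_const]
  simp only [smul_eq_mul, probReal_univ]
  ring

theorem mgf_indicator_one_le [IsProbabilityMeasure μ] {A : Set Ω} (hA : MeasurableSet A) (t : ℝ) :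
    mgf (A.indicator 1) μ t ≤ exp ((exp t - 1) * μ.real A) := by
  rw [mgf_indicator_one hA]
  linarith [add_one_le_exp ((exp t - 1) * μ.real A)]

open scoped Classical in
theorem measureReal_card_mem_le_le [Fintype ι] {A : ι → Set Ω} (hA : ∀ i, MeasurableSet (A i))
    (hindep : iIndepFun (fun i => (A i).indicator (1 : Ω → ℝ)) μ) {c : ℝ}
    (hc : ∀ i, c ≤ μ.real (A i)) {t : ℝ} (ht : t ≤ 0) (r : ℝ) :
    μ.real {ω | (#{i | ω ∈ A i} : ℝ) ≤ r} ≤ exp (-t * r + (exp t - 1) * c * Fintype.card ι) := by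
  have := hindep.isProbabilityMeasure
  set S := ∑ i, (A i).indicator (1 : Ω → ℝ)
  have hS : ∀ ω, S ω = #{i | ω ∈ A i} := fun ω => by
    simp [S, Finset.sum_apply, Set.indicator_apply]
  have hmeas : ∀ i, Measurable ((A i).indicator (1 : Ω → ℝ)) :=
    fun i => measurable_const.indicator (hA i)
  have hint : Integrable (fun ω => exp (t * S ω)) μ := by
    refine (integrable_const 1).mono' (by fun_prop) (ae_of_all _ fun ω => ?_)
    rw [norm_of_nonneg (exp_nonneg _), exp_le_one_iff, hS]
    exact mul_nonpos_of_nonpos_of_nonneg ht (Nat.cast_nonneg _)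
  have hmgf : mgf S μ t ≤ exp ((exp t - 1) * c * Fintype.card ι) := by
    have hexp : exp t - 1 ≤ 0 := by linarith [exp_le_one_iff.mpr ht]
    calc mgf S μ t = ∏ i, mgf ((A i).indicator 1) μ t := hindep.mgf_sum hmeas _
      _ ≤ ∏ _i : ι, exp ((exp t - 1) * c) :=
          prod_le_prod (fun _ _ => mgf_nonneg) fun i _ =>
            (mgf_indicator_one_le (hA i) t).trans
              (exp_le_exp.mpr (mul_le_mul_of_nonpos_left (hc i) hexp))
      _ = exp ((exp t - 1) * c * Fintype.card ι) := by
          rw [prod_const, ← exp_nat_mul, card_univ, mul_comm]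
  calc μ.real {ω | (#{i | ω ∈ A i} : ℝ) ≤ r} = μ.real {ω | S ω ≤ r} := by simp only [hS]
    _ ≤ exp (-t * r) * mgf S μ t := measure_le_le_exp_mul_mgf r ht hint
    _ ≤ exp (-t * r) * exp ((exp t - 1) * c * Fintype.card ι) := by gcongr
    _ = exp (-t * r + (exp t - 1) * c * Fintype.card ι) := (exp_add _ _).symm

end Chernoff

theorem tendsto_natCast_mul_exp_sub_of_div_tendsto_zero {a : ℕ → ℝ}
    (ha : Tendsto (fun N => a N / N) atTop (nhds 0)) {δ : ℝ} (hδ : 0 < δ) :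
    Tendsto (fun N : ℕ => N * exp (a N - δ * N)) atTop (nhds 0) := by
  have hlim : Tendsto (fun N : ℕ => (N : ℝ) * exp (-(δ / 2) * N)) atTop (nhds 0) := by
    simpa [Function.comp_def] using
      (tendsto_rpow_mul_exp_neg_mul_atTop_nhds_zero 1 (δ / 2) (half_pos hδ)).comp
        tendsto_natCast_atTop_atTop
  refine squeeze_zero' (Eventually.of_forall fun N => by positivity) ?_ hlim
  filter_upwards [ha.eventually_lt_const (half_pos hδ), eventually_gt_atTop 0] with N haN hN
  have hN' : (0 : ℝ) < N := Nat.cast_pos.mpr hN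
  rw [div_lt_iff₀ hN'] at haN
  gcongr
  linarith

theorem measureReal_lt_orderStat_le {Ω : Type*} [MeasurableSpace Ω] {μ : Measure Ω} {K : ℕ}
    {Y : Fin K → Ω → ℝ} (hY : ∀ k, Measurable (Y k)) (hindep : iIndepFun Y μ) {ε c : ℝ}
    (hc : ∀ k, c ≤ cdfOf μ (Y k) ε) (m : ℕ) :
    μ.real {ω | ε < orderStat (fun k => Y k ω) m} ≤ exp (m + (exp (-1) - 1) * c * K) := by
  have := hindep.isProbabilityMeasure
  have hA : ∀ k, MeasurableSet {ω | Y k ω ≤ ε} := fun k => measurableSet_le (hY k) measurable_const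
  have hindep' : iIndepFun (fun k => {ω | Y k ω ≤ ε}.indicator (1 : Ω → ℝ)) μ := by
    convert hindep.comp (fun _ => (Set.Iic ε).indicator (1 : ℝ → ℝ))
      (fun _ => measurable_one.indicator measurableSet_Iic) using 2 with k
    ext ω
    simp [Set.indicator_apply]
  calc μ.real {ω | ε < orderStat (fun k => Y k ω) m}
      ≤ μ.real {ω | (#{k | ω ∈ {ω | Y k ω ≤ ε}} : ℝ) ≤ m} := by
        refine measureReal_mono (fun ω hω => ?_)
        have := card_filter_le_le_of_lt_orderStat _ hω
        exact_mod_cast this.trans (Nat.sub_le m 1)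
    _ ≤ exp (-(-1) * m + (exp (-1) - 1) * c * Fintype.card (Fin K)) :=
        measureReal_card_mem_le_le hA hindep' hc (by norm_num) m
    _ = exp (m + (exp (-1) - 1) * c * K) := by simp

theorem stmt_3_general
    (Ω : ℕ → Type) (inst : ∀ N, MeasurableSpace (Ω N))
    (μ : ∀ N, Measure (Ω N)) (hprob : ∀ N, IsProbabilityMeasure (μ N))
    (X : ∀ N, Fin N → Fin N → Ω N → ℝ)
    (hmeas : ∀ N n k, Measurable (X N n k))
    (hrowindep : ∀ N (n : Fin N),
      iIndepFun (fun k => X N n k) (μ N))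
    (F : ∀ N, Fin N → ℝ → ℝ)
    (hcdf : ∀ N (n k : Fin N), cdfOf (μ N) (X N n k) = F N n)
    (hinf : ∀ e : ℝ, 0 < e → ∃ c : ℝ, 0 < c ∧ ∀ N (n : Fin N), c ≤ F N n e)
    (M : ℕ → ℕ) (hM : Tendsto (fun N => (M N : ℝ) / N) atTop (nhds 0))
    (mseq : ℕ → ℕ) (hm : ∀ N, 1 ≤ mseq N ∧ mseq N ≤ M N)
    (ε : ℝ) (hε : 0 < ε) :
    Tendsto (fun N => μ N {ω | ∃ n : Fin N, ε < orderStat (fun k => X N n k ω) (mseq N)})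
      atTop (nhds 0) := by
  obtain ⟨c, hc, hcF⟩ := hinf ε hε
  have hδ : 0 < (1 - exp (-1)) * c := mul_pos (by simp) hc
  have hbound : ∀ N, (μ N {ω | ∃ n : Fin N, ε < orderStat (fun k => X N n k ω) (mseq N)}).toReal
      ≤ N * exp (M N - (1 - exp (-1)) * c * N) := fun N => by
    calc _ = (μ N).real (⋃ n : Fin N, {ω | ε < orderStat (fun k => X N n k ω) (mseq N)}) := by
          rw [Set.ofPred_exists]; rfl
      _ ≤ ∑ n : Fin N, (μ N).real {ω | ε < orderStat (fun k => X N n k ω) (mseq N)} :=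
          measureReal_iUnion_fintype_le _
      _ ≤ ∑ _n : Fin N, exp (M N - (1 - exp (-1)) * c * N) := by
          refine sum_le_sum fun n _ => (measureReal_lt_orderStat_le (hmeas N n) (hrowindep N n)
            (fun k => (hcdf N n k).symm ▸ hcF N n) (mseq N)).trans (exp_le_exp.mpr ?_)
          have : (mseq N : ℝ) ≤ M N := by exact_mod_cast (hm N).2
          linarith
      _ = N * exp (M N - (1 - exp (-1)) * c * N) := by simp
  have hreal := squeeze_zero (fun N => ENNReal.toReal_nonneg) hbound
    (tendsto_natCast_mul_exp_sub_of_div_tendsto_zero hM hδ)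
  exact (ENNReal.tendsto_toReal_iff (fun N => measure_ne_top _ _) ENNReal.zero_ne_top).mp hreal

/-- if each row `X N n ·` is i.i.d. with continuous CDF `F N n`, positive on
`(0,∞)` and uniformly bounded below at every `ε > 0`, and `M N / N → 0`, then for every
sequence `1 ≤ m_N ≤ M_N`, the maximum over `n` of the `m_N`-th smallest row entry tends
to `0` in probability. -/
theorem stmt_3
    (Ω : ℕ → Type) (inst : ∀ N, MeasurableSpace (Ω N))
    (μ : ∀ N, Measure (Ω N)) (hprob : ∀ N, IsProbabilityMeasure (μ N))
    (X : ∀ N, Fin N → Fin N → Ω N → ℝ)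
    (hmeas : ∀ N n k, Measurable (X N n k))
    (hpos : ∀ N n k ω, 0 < X N n k ω)
    (hrowindep : ∀ N (n : Fin N),
      iIndepFun (fun k => X N n k) (μ N))
    (F : ∀ N, Fin N → ℝ → ℝ)
    (hcdf : ∀ N (n k : Fin N), cdfOf (μ N) (X N n k) = F N n)
    (hcont : ∀ N (n : Fin N), Continuous (F N n))
    (hFpos : ∀ N (n : Fin N), ∀ x : ℝ, 0 < x → 0 < F N n x)
    (hinf : ∀ e : ℝ, 0 < e → ∃ c : ℝ, 0 < c ∧ ∀ N (n : Fin N), c ≤ F N n e)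
    (M : ℕ → ℕ) (hM : Tendsto (fun N => (M N : ℝ) / N) atTop (nhds 0))
    (mseq : ℕ → ℕ) (hm : ∀ N, 1 ≤ mseq N ∧ mseq N ≤ M N)
    (ε : ℝ) (hε : 0 < ε) :
    Tendsto (fun N => μ N {ω | ∃ n : Fin N, ε < orderStat (fun k => X N n k ω) (mseq N)})
      atTop (nhds 0) :=
  stmt_3_general Ω inst μ hprob X hmeas hrowindep F hcdf hinf M hM mseq hm ε hε
end

section
/- Fix an integer m ≥ 0. For each K, let X_1,…,X_K be identically distributed unbounded random variables with one common exponentially-dominated tail distribution, and assume X_1,…,X_K are m-dependent. Let M_K be a sequence of integers with 1 ≤ M_K ≤ K, M_K → ∞, and M_K/ln^μ K → 0 for some 0 < μ < 1. Then X_{(K−M_K+1)}/X_{(K)} → 1 in probability as K → ∞. -/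
open MeasureTheory ProbabilityTheory Filter

/-!
Write `x_c = (c log K / lam) ^ (1 / γ)`, so that `1 - F x_c = K ^ (-c + o(1))`, and fix a small
`η > 0`. By a union bound, the maximum exceeds `x_{1+η}` with probability at most
`K (1 - F x_{1+η}) → 0`. The indices `(m + 1) n` split into `M` blocks of
`Q = ⌊K / ((m + 1) M)⌋` indices each, and the variables of one block are independent. If
`X_{(K-M+1)} ≤ x_{1-η}`, fewer than `M` variables exceed `x_{1-η}`, so some block has none; this
has probability at most `M F(x_{1-η}) ^ Q ≤ (m + 1) M² / (K (1 - F x_{1-η})) → 0`, because `M`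
grows more slowly than any power of `K`. Outside these two events the ratio lies in
`[((1 - η) / (1 + η)) ^ (1 / γ), 1]`.
-/

open Finset Topology

section OrderStatistics

variable {K : ℕ} (v : Fin K → ℝ)

lemma orderStat_eq_getElem {j : ℕ} (hj : j - 1 < K) :
    orderStat v j = ((univ.val.map v).sort (· ≤ ·))[j - 1]'(by simpa using hj) :=
  List.getD_eq_getElem _ _ _

lemma exists_eq_orderStat {j : ℕ} (hj1 : 1 ≤ j) (hjK : j ≤ K) : ∃ k, v k = orderStat v j := by
  rw [orderStat_eq_getElem v (by omega)]
  have hmem := List.getElem_mem (l := (univ.val.map v).sort (· ≤ ·)) (n := j - 1) (by simp; omega)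
  rw [Multiset.mem_sort, Multiset.mem_map] at hmem
  simpa using hmem

lemma orderStat_mono {i j : ℕ} (hi : 1 ≤ i) (hij : i ≤ j) (hjK : j ≤ K) :
    orderStat v i ≤ orderStat v j := by
  rw [orderStat_eq_getElem v (by omega), orderStat_eq_getElem v (by omega)]
  exact (Multiset.pairwise_sort _ _).sortedLE.getElem_le_getElem_of_le (by omega)

lemma le_card_filter_le_of_orderStat_le {j : ℕ} {x : ℝ} (hj1 : 1 ≤ j) (hjK : j ≤ K)
    (h : orderStat v j ≤ x) : j ≤ #{k | v k ≤ x} := by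
  set l := (univ.val.map v).sort (· ≤ ·)
  have hl : l.length = K := by simp [l]
  have hcard : #{k | v k ≤ x} = l.countP (· ≤ x) := by
    rw [← Multiset.coe_countP, Multiset.sort_eq, Multiset.countP_map]
    simp [Finset.card, Finset.filter_val]
  have htake : ∀ y ∈ l.take j, y ≤ x := by
    intro y hy
    obtain ⟨i, hi, rfl⟩ := List.mem_iff_getElem.1 hy
    rw [List.getElem_take]
    refine le_trans ?_ ((orderStat_eq_getElem v (by omega)).symm.trans_le h)
    exact (Multiset.pairwise_sort _ _).sortedLE.getElem_le_getElem_of_le (by simp at hi; omega)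
  calc j = (l.take j).length := by simp [hl]; omega
    _ = (l.take j).countP (· ≤ x) := (List.countP_eq_length.2 (by simpa using htake)).symm
    _ ≤ l.countP (· ≤ x) := (List.take_sublist j l).countP_le
    _ = #{k | v k ≤ x} := hcard.symm

end OrderStatistics

lemma abs_div_sub_one_le {a b y z : ℝ} (ha : 0 < a) (hay : a < y) (hyz : y ≤ z) (hzb : z ≤ b) :
    |y / z - 1| ≤ 1 - a / b := by
  have hz : 0 < z := by linarith
  rw [abs_of_nonpos (by rw [sub_nonpos, div_le_one hz]; exact hyz)]
  linarith [div_le_div₀ (by linarith) hay.le hz hzb]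

lemma lt_orderStat_or_orderStat_le {K M : ℕ} (v : Fin K → ℝ) (hM : 1 ≤ M) (hMK : M ≤ K)
    {a b δ : ℝ} (ha : 0 < a) (hab : 1 - a / b < δ)
    (h : δ < |orderStat v (K - M + 1) / orderStat v K - 1|) :
    b < orderStat v K ∨ orderStat v (K - M + 1) ≤ a := by
  by_contra! hc
  linarith [abs_div_sub_one_le ha hc.2 (orderStat_mono v (by omega) (by omega) le_rfl) hc.1]

lemma Finset.exists_disjoint_of_card_lt_card {ι α : Type*} [DecidableEq α] {s : Finset ι}
    {S : ι → Finset α} (hS : (s : Set ι).PairwiseDisjoint S) {t : Finset α} (ht : #t < #s) :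
    ∃ b ∈ s, Disjoint (S b) t := by
  by_contra! h
  have hst : #s ≤ #t := calc
    #s = ∑ _b ∈ s, 1 := by simp
    _ ≤ ∑ b ∈ s, #(S b ∩ t) :=
      sum_le_sum fun b hb => card_pos.2 (not_disjoint_iff_nonempty_inter.1 (h b hb))
    _ = #(s.biUnion fun b => S b ∩ t) :=
      (card_biUnion fun b hb b' hb' hbb' => (hS hb hb' hbb').mono inter_subset_left
        inter_subset_left).symm
    _ ≤ #t := card_le_card (biUnion_subset.2 fun _ _ => inter_subset_right)
  omega

section SpacedBlocks

variable {K : ℕ} (m M Q : ℕ) (h : M * Q * (m + 1) ≤ K)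

/-- The index `(m + 1) * (i + Q * b)`: the `i`-th index of the `b`-th block. -/
def spacedIndex (p : Fin M × Fin Q) : Fin K :=
  Fin.castLE h (finProdFinEquiv (finProdFinEquiv p, (0 : Fin (m + 1))))

lemma spacedIndex_injective : Function.Injective (spacedIndex m M Q h) :=
  (Fin.castLE_injective h).comp
    (finProdFinEquiv.injective.comp ((Prod.mk_left_injective 0).comp finProdFinEquiv.injective))

lemma spacedIndex_val (p : Fin M × Fin Q) :
    (spacedIndex m M Q h p : ℕ) = (m + 1) * (finProdFinEquiv p : ℕ) := by
  simp [spacedIndex, finProdFinEquiv]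

lemma lt_abs_spacedIndex_sub {p q : Fin M × Fin Q} (hpq : p ≠ q) :
    (m : ℤ) < |(spacedIndex m M Q h p : ℤ) - (spacedIndex m M Q h q : ℤ)| := by
  have hne : (finProdFinEquiv p : ℤ) ≠ finProdFinEquiv q := by
    exact_mod_cast Fin.val_ne_of_ne (finProdFinEquiv.injective.ne hpq)
  rw [spacedIndex_val, spacedIndex_val]
  push_cast
  rw [← mul_sub, abs_mul, abs_of_pos (by positivity : (0 : ℤ) < m + 1)]
  nlinarith [Int.one_le_abs (sub_ne_zero.2 hne)]

def spacedBlock (b : Fin M) : Finset (Fin K) :=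
  univ.image fun i => spacedIndex m M Q h (b, i)

lemma card_spacedBlock (b : Fin M) : #(spacedBlock m M Q h b) = Q := by
  rw [spacedBlock, card_image_of_injective _ fun i i' hii' =>
    (Prod.mk_right_injective b) (spacedIndex_injective m M Q h hii'), card_univ, Fintype.card_fin]

lemma pairwiseDisjoint_spacedBlock :
    (Set.univ : Set (Fin M)).PairwiseDisjoint (spacedBlock m M Q h) := by
  intro b _ b' _ hbb'
  simp only [Function.onFun, spacedBlock, disjoint_left, mem_image, mem_univ, true_and]
  rintro _ ⟨i, rfl⟩ ⟨i', hi'⟩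
  exact hbb' (congrArg Prod.fst (spacedIndex_injective m M Q h hi')).symm

lemma spacedBlock_spaced (b : Fin M) :
    ∀ i ∈ spacedBlock m M Q h b, ∀ j ∈ spacedBlock m M Q h b, i ≠ j →
      (m : ℤ) < |(i : ℤ) - (j : ℤ)| := by
  simp only [spacedBlock, mem_image, mem_univ, true_and]
  rintro _ ⟨i, rfl⟩ _ ⟨j, rfl⟩ hij
  exact lt_abs_spacedIndex_sub m M Q h fun hp => hij (congrArg _ hp)

end SpacedBlocks

lemma pow_mul_succ_mul_one_sub_le {p : ℝ} (hp0 : 0 ≤ p) (hp1 : p ≤ 1) (n : ℕ) :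
    p ^ n * ((n + 1) * (1 - p)) ≤ 1 := by
  have hsum : (n + 1) * p ^ n ≤ ∑ i ∈ range (n + 1), p ^ i := by
    simpa using card_nsmul_le_sum (range (n + 1)) (p ^ ·) (p ^ n)
      fun i hi => pow_le_pow_of_le_one hp0 hp1 (by simpa using hi)
  calc p ^ n * ((n + 1) * (1 - p)) = (1 - p) * ((n + 1) * p ^ n) := by ring
    _ ≤ (1 - p) * ∑ i ∈ range (n + 1), p ^ i := by gcongr
    _ = 1 - p ^ (n + 1) := mul_neg_geom_sum p _
    _ ≤ 1 := by linarith [pow_nonneg hp0 (n + 1)]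

lemma mul_pow_div_le {p : ℝ} (hp0 : 0 ≤ p) (hp1 : p < 1) {a M K : ℕ} (haM : 0 < a * M)
    (hK : 0 < K) : (M : ℝ) * p ^ (K / (a * M)) ≤ a * M ^ 2 / (K * (1 - p)) := by
  set Q := K / (a * M)
  have hKQ : (K : ℝ) ≤ a * M * (Q + 1) := by exact_mod_cast (Nat.lt_mul_div_succ K haM).le
  have hgeom := pow_mul_succ_mul_one_sub_le hp0 hp1.le Q
  rw [le_div_iff₀ (mul_pos (by exact_mod_cast hK) (by linarith))]
  have : 0 ≤ (M : ℝ) * p ^ Q * (1 - p) := mul_nonneg (by positivity) (by linarith)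
  calc (M : ℝ) * p ^ Q * (K * (1 - p)) = (M * p ^ Q * (1 - p)) * K := by ring
    _ ≤ (M * p ^ Q * (1 - p)) * (a * M * (Q + 1)) := by gcongr
    _ = a * M ^ 2 * (p ^ Q * ((Q + 1) * (1 - p))) := by ring
    _ ≤ a * M ^ 2 := mul_le_of_le_one_right (by positivity) hgeom

section Probability

variable {Ω : Type*} [MeasurableSpace Ω] {μ : Measure Ω}

lemma cdfOf_nonneg (μ : Measure Ω) (X : Ω → ℝ) (x : ℝ) : 0 ≤ cdfOf μ X x :=
  ENNReal.toReal_nonneg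

lemma measure_le_eq_ofReal_cdfOf [IsFiniteMeasure μ] (X : Ω → ℝ) (x : ℝ) :
    μ {ω | X ω ≤ x} = ENNReal.ofReal (cdfOf μ X x) :=
  (ENNReal.ofReal_toReal (measure_ne_top _ _)).symm

lemma measure_lt_eq_ofReal_one_sub_cdfOf [IsProbabilityMeasure μ] {X : Ω → ℝ}
    (hX : Measurable X) (x : ℝ) :
    μ {ω | x < X ω} = ENNReal.ofReal (1 - cdfOf μ X x) := by
  have hcompl : {ω | x < X ω} = {ω | X ω ≤ x}ᶜ := by ext; simp
  rw [hcompl, measure_compl (measurableSet_le hX measurable_const) (measure_ne_top _ _),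
    measure_univ, measure_le_eq_ofReal_cdfOf, ENNReal.ofReal_sub _ (cdfOf_nonneg μ X x),
    ENNReal.ofReal_one]

lemma measure_lt_orderStat_top_le [IsProbabilityMeasure μ] {K : ℕ} {X : Fin K → Ω → ℝ}
    (hX : ∀ k, Measurable (X k)) {F : ℝ → ℝ} (hcdf : ∀ k, cdfOf μ (X k) = F) (hK : 1 ≤ K)
    (x : ℝ) : μ {ω | x < orderStat (fun k => X k ω) K} ≤ ENNReal.ofReal (K * (1 - F x)) := by
  have hsub : {ω | x < orderStat (fun k => X k ω) K} ⊆ ⋃ k, {ω | x < X k ω} := by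
    intro ω hω
    obtain ⟨k, hk⟩ := exists_eq_orderStat (fun k => X k ω) hK le_rfl
    exact Set.mem_iUnion.2 ⟨k, by simpa [← hk] using hω⟩
  calc μ {ω | x < orderStat (fun k => X k ω) K} ≤ ∑ k, μ {ω | x < X k ω} :=
        (measure_mono hsub).trans (measure_iUnion_fintype_le _ _)
    _ = ∑ _k : Fin K, ENNReal.ofReal (1 - F x) := by
        simp only [measure_lt_eq_ofReal_one_sub_cdfOf (hX _), hcdf]
    _ = ENNReal.ofReal (K * (1 - F x)) := by
        rw [sum_const, card_univ, Fintype.card_fin, nsmul_eq_mul,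
          ENNReal.ofReal_mul (by positivity), ENNReal.ofReal_natCast]

lemma ProbabilityTheory.iIndepFun.measure_biInter_le {ι : Type*} {S : Finset ι} {X : ι → Ω → ℝ}
    (hX : iIndepFun (fun i : S => X i) μ) (x : ℝ) :
    μ (⋂ i ∈ S, {ω | X i ω ≤ x}) = ∏ i ∈ S, μ {ω | X i ω ≤ x} := by
  have h := hX.meas_iInter (s := fun i : S => {ω | X i ω ≤ x})
    fun _ => comap_measurable _ measurableSet_Iic
  rw [← prod_coe_sort, ← h]
  congr 1
  ext ω
  simp

lemma MDepFam.measure_orderStat_le_le [IsProbabilityMeasure μ] {m K : ℕ}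
    {X : Fin K → Ω → ℝ} (hX : MDepFam μ m X) {F : ℝ → ℝ} (hcdf : ∀ k, cdfOf μ (X k) = F)
    {M : ℕ} (hM : 1 ≤ M) (hMK : M ≤ K) {x : ℝ} (hFx : F x < 1) :
    μ {ω | orderStat (fun k => X k ω) (K - M + 1) ≤ x} ≤
      ENNReal.ofReal ((m + 1) * M ^ 2 / (K * (1 - F x))) := by
  have hF0 : 0 ≤ F x := hcdf ⟨0, by omega⟩ ▸ cdfOf_nonneg μ _ x
  set Q := K / ((m + 1) * M)
  have hQ : M * Q * (m + 1) ≤ K := calc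
    M * Q * (m + 1) = Q * ((m + 1) * M) := by ring
    _ ≤ K := Nat.div_mul_le_self _ _
  set S := spacedBlock m M Q hQ
  have hsub : {ω | orderStat (fun k => X k ω) (K - M + 1) ≤ x} ⊆
      ⋃ b, ⋂ k ∈ S b, {ω | X k ω ≤ x} := by
    intro ω hω
    have hle := le_card_filter_le_of_orderStat_le _ (by omega) (by omega) hω
    have hlt : #{k | ¬X k ω ≤ x} < #(univ : Finset (Fin M)) := by
      have := card_filter_add_card_filter_not (s := univ) (fun k => X k ω ≤ x)
      simp only [card_univ, Fintype.card_fin] at this ⊢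
      omega
    obtain ⟨b, -, hb⟩ := exists_disjoint_of_card_lt_card
      (by simpa using pairwiseDisjoint_spacedBlock m M Q hQ) hlt
    simp only [Set.mem_iUnion, Set.mem_iInter]
    exact ⟨b, fun k hk => by_contra fun hxk => disjoint_left.1 hb hk (by simpa using hxk)⟩
  calc _ ≤ ∑ b, μ (⋂ k ∈ S b, {ω | X k ω ≤ x}) :=
        (measure_mono hsub).trans (measure_iUnion_fintype_le _ _)
    _ = ∑ _b : Fin M, ENNReal.ofReal (F x) ^ Q := by
        refine sum_congr rfl fun b _ => ?_
        rw [iIndepFun.measure_biInter_le (hX _ (spacedBlock_spaced m M Q hQ b)),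
          prod_congr rfl fun k _ => (measure_le_eq_ofReal_cdfOf (X k) x).trans (by rw [hcdf]),
          prod_const, card_spacedBlock]
    _ = ENNReal.ofReal (M * F x ^ Q) := by
        rw [sum_const, card_univ, Fintype.card_fin, nsmul_eq_mul,
          ENNReal.ofReal_mul (by positivity), ENNReal.ofReal_natCast, ENNReal.ofReal_pow hF0]
    _ ≤ ENNReal.ofReal ((m + 1) * M ^ 2 / (K * (1 - F x))) := by
        refine ENNReal.ofReal_le_ofReal ?_
        exact_mod_cast mul_pow_div_le hF0 hFx (a := m + 1) (by positivity) (by omega)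

end Probability

section Asymptotics

open Real

lemma eventually_mul_log_rpow_le_rpow (C b : ℝ) {ε : ℝ} (hε : 0 < ε) :
    ∀ᶠ x in atTop, C * log x ^ b ≤ x ^ ε := by
  filter_upwards [((isLittleO_log_rpow_rpow_atTop b hε).const_mul_left C).def one_pos,
    eventually_ge_atTop 0] with x hx hx0
  rw [one_mul, norm_of_nonneg (rpow_nonneg hx0 _)] at hx
  exact (le_abs_self _).trans hx

lemma eventually_rpow_neg_le_mul_log_rpow {C : ℝ} (hC : 0 < C) (b : ℝ) {ε : ℝ} (hε : 0 < ε) :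
    ∀ᶠ x in atTop, x ^ (-ε) ≤ C * log x ^ b := by
  filter_upwards [eventually_mul_log_rpow_le_rpow C⁻¹ (-b) hε, eventually_gt_atTop 1]
    with x hx hx1
  have hlog : 0 < log x := log_pos hx1
  rw [rpow_neg hlog.le, ← mul_inv] at hx
  rw [rpow_neg (by linarith)]
  exact inv_le_of_inv_le₀ (by positivity) hx

lemma eventually_le_rpow_of_tendsto_div_log_rpow {f : ℕ → ℝ} {t : ℝ}
    (h : Tendsto (fun K : ℕ => f K / log K ^ t) atTop (𝓝 0)) {s : ℝ} (hs : 0 < s) :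
    ∀ᶠ K : ℕ in atTop, f K ≤ K ^ s := by
  filter_upwards [h.eventually (eventually_lt_nhds one_pos),
    tendsto_natCast_atTop_atTop.eventually (eventually_mul_log_rpow_le_rpow 1 t hs),
    tendsto_natCast_atTop_atTop.eventually (eventually_gt_atTop (1 : ℝ))] with K hf hlog hK
  rw [div_lt_one (rpow_pos_of_pos (log_pos hK) t)] at hf
  linarith

lemma exists_one_sub_lt_div_rpow {δ : ℝ} (hδ : 0 < δ) (r : ℝ) :
    ∃ η, 0 < η ∧ η < 1 ∧ 1 - δ < ((1 - η) / (1 + η)) ^ r := by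
  have hcont : ContinuousAt (fun η : ℝ => ((1 - η) / (1 + η)) ^ r) 0 :=
    ((continuousAt_const.sub continuousAt_id).div (continuousAt_const.add continuousAt_id)
      (by norm_num)).rpow_const (Or.inl (by norm_num))
  have hev := hcont.eventually (lt_mem_nhds (show 1 - δ < ((1 - 0) / (1 + 0)) ^ r by simpa))
  obtain ⟨η, hη, ⟨hη0, hη1⟩⟩ := ((hev.filter_mono nhdsWithin_le_nhds).and
    (Ioo_mem_nhdsGT one_pos)).exists
  exact ⟨η, hη0, hη1, hη⟩

end Asymptotics

section TailLevel

open Real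

/-- The point `x` at which `exp (-lam * x ^ γ) = K ^ (-c)`. -/
noncomputable def tailLevel (lam γ c K : ℝ) : ℝ := (c * log K / lam) ^ γ⁻¹

variable {lam γ : ℝ}

lemma tailLevel_pos (hlam : 0 < lam) {c K : ℝ} (hc : 0 < c) (hK : 1 < K) :
    0 < tailLevel lam γ c K :=
  rpow_pos_of_pos (by have := log_pos hK; positivity) _

lemma tailLevel_div_tailLevel (hlam : 0 < lam) {a b K : ℝ} (ha : 0 ≤ a) (hb : 0 < b)
    (hK : 1 < K) :
    tailLevel lam γ a K / tailLevel lam γ b K = (a / b) ^ γ⁻¹ := by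
  have hlog := log_pos hK
  rw [tailLevel, tailLevel, ← div_rpow (by positivity) (by positivity)]
  congr 1
  field_simp

lemma tendsto_tailLevel_atTop (hlam : 0 < lam) (hγ : 0 < γ) {c : ℝ} (hc : 0 < c) :
    Tendsto (tailLevel lam γ c) atTop atTop := by
  refine (tendsto_rpow_atTop (inv_pos.2 hγ)).comp ?_
  simpa only [mul_div_right_comm, mul_comm] using
    tendsto_log_atTop.atTop_mul_const (div_pos hc hlam)

lemma mul_tailLevel_rpow_mul_exp (hlam : 0 < lam) (hγ : 0 < γ) (α β : ℝ) {c K : ℝ} (hc : 0 < c)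
    (hK : 1 < K) :
    α * tailLevel lam γ c K ^ β * exp (-lam * tailLevel lam γ c K ^ γ) =
      α * (c / lam) ^ (γ⁻¹ * β) * log K ^ (γ⁻¹ * β) * K ^ (-c) := by
  have hlog := log_pos hK
  have hbase : 0 ≤ c * log K / lam := by positivity
  have hexp : exp (-lam * (c * log K / lam)) = K ^ (-c) := by
    rw [rpow_def_of_pos (by linarith)]
    congr 1
    field_simp
  rw [tailLevel, ← rpow_mul hbase, ← rpow_mul hbase, inv_mul_cancel₀ hγ.ne', rpow_one, hexp,
    mul_div_right_comm, mul_rpow (div_pos hc hlam).le hlog.le]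
  ring

end TailLevel

namespace ExpDomTail

open Real

variable {F : ℝ → ℝ} {α β lam γ : ℝ}

lemma eventually_rpow_le_tail_le_rpow (htail : ExpDomTail F α β lam γ) (hα : 0 < α)
    (hlam : 0 < lam) (hγ : 0 < γ) {c ε : ℝ} (hc : 0 < c) (hε : 0 < ε) :
    ∀ᶠ K in atTop, K ^ (-c - ε) ≤ 1 - F (tailLevel lam γ c K) ∧
      1 - F (tailLevel lam γ c K) ≤ K ^ (-c + ε) := by
  have hbetween : ∀ᶠ x in atTop,
      α * x ^ β * exp (-lam * x ^ γ) / 2 ≤ 1 - F x ∧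
        1 - F x ≤ 2 * (α * x ^ β * exp (-lam * x ^ γ)) := by
    filter_upwards [htail (Ioo_mem_nhds one_half_lt_one one_lt_two), eventually_gt_atTop 0]
      with x hx hx0
    have hg : 0 < α * x ^ β * exp (-lam * x ^ γ) := by positivity
    obtain ⟨h1, h2⟩ := hx
    rw [lt_div_iff₀ hg] at h1
    rw [div_lt_iff₀ hg] at h2
    constructor <;> linarith
  set A := α * (c / lam) ^ (γ⁻¹ * β)
  have hA : 0 < A := by positivity
  filter_upwards [(tendsto_tailLevel_atTop hlam hγ hc).eventually hbetween,
    eventually_rpow_neg_le_mul_log_rpow (half_pos hA) (γ⁻¹ * β) hε,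
    eventually_mul_log_rpow_le_rpow (2 * A) (γ⁻¹ * β) hε, eventually_gt_atTop 1]
    with K hb hlo hhi hK
  rw [mul_tailLevel_rpow_mul_exp hlam hγ α β hc hK] at hb
  have hK0 : 0 < K := by linarith
  constructor
  · calc K ^ (-c - ε) = K ^ (-ε) * K ^ (-c) := by rw [← rpow_add hK0]; ring_nf
      _ ≤ A / 2 * log K ^ (γ⁻¹ * β) * K ^ (-c) := by gcongr
      _ = A * log K ^ (γ⁻¹ * β) * K ^ (-c) / 2 := by ring
      _ ≤ 1 - F (tailLevel lam γ c K) := hb.1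
  · calc 1 - F (tailLevel lam γ c K) ≤ 2 * (A * log K ^ (γ⁻¹ * β) * K ^ (-c)) := hb.2
      _ = 2 * A * log K ^ (γ⁻¹ * β) * K ^ (-c) := by ring
      _ ≤ K ^ ε * K ^ (-c) := by gcongr
      _ = K ^ (-c + ε) := by rw [← rpow_add hK0]; ring_nf

lemma tendsto_mul_one_sub_tailLevel (htail : ExpDomTail F α β lam γ) (hα : 0 < α)
    (hlam : 0 < lam) (hγ : 0 < γ) {c : ℝ} (hc : 1 < c) :
    Tendsto (fun K => K * (1 - F (tailLevel lam γ c K))) atTop (𝓝 0) := by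
  set r := (c - 1) / 2
  have hr : 0 < r := by simp only [r]; linarith
  have hev := (htail.eventually_rpow_le_tail_le_rpow hα hlam hγ (c := c) (by linarith) hr).and
    (eventually_gt_atTop 0)
  refine tendsto_of_tendsto_of_tendsto_of_le_of_le' tendsto_const_nhds
    (tendsto_rpow_neg_atTop hr) (hev.mono fun K ⟨hK, hK0⟩ => ?_) (hev.mono fun K ⟨hK, hK0⟩ => ?_)
  · exact mul_nonneg hK0.le ((rpow_pos_of_pos hK0 _).le.trans hK.1)
  · calc K * (1 - F (tailLevel lam γ c K)) ≤ K ^ (1 : ℝ) * K ^ (-c + r) := by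
          rw [rpow_one]; gcongr; exact hK.2
      _ = K ^ (-r) := by rw [← rpow_add hK0]; congr 1; simp only [r]; ring

lemma tendsto_sq_div_mul_one_sub_tailLevel (htail : ExpDomTail F α β lam γ) (hα : 0 < α)
    (hlam : 0 < lam) (hγ : 0 < γ) {c : ℝ} (hc0 : 0 < c) (hc : c < 1) {M : ℕ → ℕ}
    (hM : ∀ s : ℝ, 0 < s → ∀ᶠ K : ℕ in atTop, (M K : ℝ) ≤ (K : ℝ) ^ s) :
    Tendsto (fun K : ℕ => (M K : ℝ) ^ 2 / (K * (1 - F (tailLevel lam γ c K)))) atTop (𝓝 0) := by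
  set r := (1 - c) / 2
  have hr : 0 < r := by simp only [r]; linarith
  have hev := (tendsto_natCast_atTop_atTop.eventually
    ((htail.eventually_rpow_le_tail_le_rpow hα hlam hγ hc0 hr).and (eventually_gt_atTop 0))).and
    (hM (r / 4) (by positivity))
  refine tendsto_of_tendsto_of_tendsto_of_le_of_le' tendsto_const_nhds
    ((tendsto_rpow_neg_atTop (half_pos hr)).comp tendsto_natCast_atTop_atTop)
    (hev.mono fun K ⟨⟨hK, hK0⟩, _⟩ => ?_) (hev.mono fun K ⟨⟨hK, hK0⟩, hMK⟩ => ?_)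
  · exact div_nonneg (by positivity) (mul_nonneg hK0.le ((rpow_pos_of_pos hK0 _).le.trans hK.1))
  · have hlow : (K : ℝ) ^ r ≤ K * (1 - F (tailLevel lam γ c K)) := calc
      (K : ℝ) ^ r = K ^ (1 : ℝ) * K ^ (-c - r) := by
        rw [← rpow_add hK0]; congr 1; simp only [r]; ring
      _ ≤ K * (1 - F (tailLevel lam γ c K)) := by rw [rpow_one]; gcongr; exact hK.1
    have hsq : (M K : ℝ) ^ 2 ≤ (K : ℝ) ^ (r / 2) := calc
      (M K : ℝ) ^ 2 ≤ ((K : ℝ) ^ (r / 4)) ^ 2 := by gcongr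
      _ = (K : ℝ) ^ (r / 2) := by rw [← rpow_natCast, ← rpow_mul hK0.le]; ring_nf
    calc (M K : ℝ) ^ 2 / (K * (1 - F (tailLevel lam γ c K))) ≤ (K : ℝ) ^ (r / 2) / K ^ r :=
          div_le_div₀ (by positivity) hsq (by positivity) hlow
      _ = (K : ℝ) ^ (-(r / 2)) := by rw [← rpow_sub hK0]; congr 1; ring

end ExpDomTail

theorem stmt_8_general (m : ℕ)
    (Ω : ℕ → Type) (inst : ∀ K, MeasurableSpace (Ω K))
    (μ : ∀ K, Measure (Ω K)) (hprob : ∀ K, IsProbabilityMeasure (μ K))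
    (X : ∀ K, Fin K → Ω K → ℝ)
    (hmeas : ∀ K k, Measurable (X K k))
    (F : ℝ → ℝ) (hFunb : ∀ x, F x < 1)
    (α β lam γ : ℝ) (hα : 0 < α) (hlam : 0 < lam) (hγ : 0 < γ)
    (htail : ExpDomTail F α β lam γ)
    (hcdf : ∀ K (k : Fin K), cdfOf (μ K) (X K k) = F)
    (hmdep : ∀ K, MDepFam (μ K) m (X K))
    (M : ℕ → ℕ) (hM1 : ∀ K, 1 ≤ M K ∧ M K ≤ K)
    (t : ℝ)
    (hM3 : Tendsto (fun K : ℕ => (M K : ℝ) / (Real.log K) ^ t) atTop (nhds 0))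
    (δ : ℝ) (hδ : 0 < δ) :
    Tendsto (fun K => μ K {ω |
        δ < |orderStat (fun k => X K k ω) (K - M K + 1) / orderStat (fun k => X K k ω) K - 1|})
      atTop (nhds 0) := by
  obtain ⟨η, hη0, hη1, hηδ⟩ := exists_one_sub_lt_div_rpow hδ γ⁻¹
  have hbound : ∀ᶠ K : ℕ in atTop, μ K {ω |
      δ < |orderStat (fun k => X K k ω) (K - M K + 1) / orderStat (fun k => X K k ω) K - 1|} ≤
        ENNReal.ofReal (K * (1 - F (tailLevel lam γ (1 + η) K))) +
          ENNReal.ofReal ((m + 1) * M K ^ 2 / (K * (1 - F (tailLevel lam γ (1 - η) K)))) := by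
    filter_upwards [eventually_gt_atTop 1] with K hK
    have := hprob K
    have hK' : (1 : ℝ) < K := by exact_mod_cast hK
    obtain ⟨hM, hMK⟩ := hM1 K
    refine (measure_mono fun ω hω => lt_orderStat_or_orderStat_le _ hM hMK
      (tailLevel_pos hlam (by linarith) hK') ?_ hω).trans ((measure_union_le _ _).trans
        (add_le_add (measure_lt_orderStat_top_le (hmeas K) (hcdf K) (by omega) _)
          (MDepFam.measure_orderStat_le_le (hmdep K) (hcdf K) hM hMK (hFunb _))))
    rwa [tailLevel_div_tailLevel hlam (by linarith) (by linarith) hK', sub_lt_comm]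
  have hlim : Tendsto (fun K : ℕ => ENNReal.ofReal (K * (1 - F (tailLevel lam γ (1 + η) K))) +
      ENNReal.ofReal ((m + 1) * M K ^ 2 / (K * (1 - F (tailLevel lam γ (1 - η) K)))))
      atTop (𝓝 0) := by
    have h1 := (htail.tendsto_mul_one_sub_tailLevel hα hlam hγ (c := 1 + η) (by linarith)).comp
      tendsto_natCast_atTop_atTop
    have h2 := (htail.tendsto_sq_div_mul_one_sub_tailLevel hα hlam hγ (c := 1 - η) (by linarith)
      (by linarith) fun s hs => eventually_le_rpow_of_tendsto_div_log_rpow hM3 hs).const_mul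
      ((m : ℝ) + 1)
    simpa [mul_div_assoc] using (ENNReal.tendsto_ofReal h1).add (ENNReal.tendsto_ofReal h2)
  exact tendsto_of_tendsto_of_tendsto_of_le_of_le' tendsto_const_nhds hlim
    (.of_forall fun _ => zero_le) hbound

/-- for identically distributed, `m`-dependent, unbounded random variables with
a common exponentially-dominated tail distribution, and integers `1 ≤ M_K ≤ K` with
`M_K → ∞` and `M_K / ln^μ K → 0` for some `0 < μ < 1`, the ratio
`X_{(K-M_K+1)} / X_{(K)}` converges to `1` in probability. -/
theorem stmt_8 (m : ℕ)
    (Ω : ℕ → Type) (inst : ∀ K, MeasurableSpace (Ω K))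
    (μ : ∀ K, Measure (Ω K)) (hprob : ∀ K, IsProbabilityMeasure (μ K))
    (X : ∀ K, Fin K → Ω K → ℝ)
    (hmeas : ∀ K k, Measurable (X K k))
    (F : ℝ → ℝ) (hFcont : Continuous F) (hFunb : ∀ x, F x < 1)
    (α β lam γ : ℝ) (hα : 0 < α) (hlam : 0 < lam) (hγ : 0 < γ)
    (htail : ExpDomTail F α β lam γ)
    (hcdf : ∀ K (k : Fin K), cdfOf (μ K) (X K k) = F)
    (hmdep : ∀ K, MDepFam (μ K) m (X K))
    (M : ℕ → ℕ) (hM1 : ∀ K, 1 ≤ M K ∧ M K ≤ K)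
    (hM2 : Tendsto (fun K => (M K : ℝ)) atTop atTop)
    (t : ℝ) (ht0 : 0 < t) (ht1 : t < 1)
    (hM3 : Tendsto (fun K : ℕ => (M K : ℝ) / (Real.log K) ^ t) atTop (nhds 0))
    (δ : ℝ) (hδ : 0 < δ) :
    Tendsto (fun K => μ K {ω |
        δ < |orderStat (fun k => X K k ω) (K - M K + 1) / orderStat (fun k => X K k ω) K - 1|})
      atTop (nhds 0) :=
  stmt_8_general m Ω inst μ hprob X hmeas F hFunb α β lam γ hα hlam hγ htail hcdf hmdep M hM1 t hM3
    δ hδ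
end

section
/- Let X be a positive random variable with CDF F_X and probability density function f_X. If there exist α, γ, λ > 0 and β ∈ ℝ such that lim_{x→∞} f_X(x)/(α γ λ x^{β+γ−1} e^{−λ x^γ}) = 1, then lim_{x→∞} (1 − F_X(x))/(α x^β e^{−λ x^γ}) = 1; that is, X has an exponentially-dominated tail distribution with parameters (α, β, λ, γ). -/
/-!
The tail `G x = α x^β e^{-λ x^γ}` has derivative `-g` with
`g x = α x^{β-1} e^{-λ x^γ} (γ λ x^γ - β)`, and `g` is asymptotically equivalent to the model
density `α γ λ x^{β+γ-1} e^{-λ x^γ}`, hence to `f`. Since `g` is eventually nonnegative,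
integrating `f ~ g` over `(x, ∞)` preserves the equivalence, so
`1 - F x = ∫_{(x,∞)} f ~ ∫_{(x,∞)} g = G x`.
-/

open MeasureTheory ProbabilityTheory Filter

open Set Asymptotics Topology

theorem Asymptotics.IsEquivalent.integral_Ioi {f h : ℝ → ℝ} (hfh : f ~[atTop] h)
    (hh_nonneg : ∀ᶠ t in atTop, 0 ≤ h t) (hf : IntegrableAtFilter f atTop)
    (hh : IntegrableAtFilter h atTop) :
    (fun x => ∫ t in Ioi x, f t) ~[atTop] fun x => ∫ t in Ioi x, h t := by
  refine IsLittleO.of_bound fun c hc => ?_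
  obtain ⟨a, hfa⟩ := integrableAtFilter_atTop_iff.1 hf
  obtain ⟨b, hhb⟩ := integrableAtFilter_atTop_iff.1 hh
  obtain ⟨M, hM⟩ := eventually_atTop.1 ((hfh.isLittleO.bound hc).and hh_nonneg)
  filter_upwards [eventually_ge_atTop (max (max a b) M)] with x hx
  simp only [max_le_iff] at hx
  have hfx : IntegrableOn f (Ioi x) := hfa.mono_set (Ioi_subset_Ici hx.1.1)
  have hhx : IntegrableOn h (Ioi x) := hhb.mono_set (Ioi_subset_Ici hx.1.2)
  have hM' : ∀ t ∈ Ioi x, ‖f t - h t‖ ≤ c * ‖h t‖ ∧ 0 ≤ h t :=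
    fun t ht => hM t (hx.2.trans (le_of_lt ht))
  have hint_nonneg : 0 ≤ ∫ t in Ioi x, h t :=
    setIntegral_nonneg measurableSet_Ioi fun t ht => (hM' t ht).2
  calc ‖(∫ t in Ioi x, f t) - ∫ t in Ioi x, h t‖ = ‖∫ t in Ioi x, (f t - h t)‖ := by
        rw [integral_sub hfx hhx]
    _ ≤ ∫ t in Ioi x, c * h t := by
        refine norm_integral_le_of_norm_le (hhx.const_mul c)
          ((ae_restrict_iff' measurableSet_Ioi).2 (ae_of_all _ fun t ht => ?_))
        simpa only [Real.norm_of_nonneg (hM' t ht).2] using (hM' t ht).1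
    _ = c * ‖∫ t in Ioi x, h t‖ := by
        rw [integral_const_mul, Real.norm_of_nonneg hint_nonneg]

theorem integrableAtFilter_and_integral_Ioi_eq_of_hasDerivAt_neg {G g : ℝ → ℝ}
    (hG : ∀ᶠ t in atTop, HasDerivAt G (-g t) t) (hg : ∀ᶠ t in atTop, 0 ≤ g t)
    (hG0 : Tendsto G atTop (𝓝 0)) :
    IntegrableAtFilter g atTop ∧ ∀ᶠ x in atTop, ∫ t in Ioi x, g t = G x := by
  obtain ⟨a, ha⟩ := eventually_atTop.1 (hG.and hg)
  have hderiv : ∀ x ≥ a, ∀ t ∈ Ici x, HasDerivAt (fun y => -G y) (g t) t :=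
    fun x hx t ht => (ha t (hx.trans ht)).1.neg.congr_deriv (neg_neg _)
  have hnonneg : ∀ x ≥ a, ∀ t ∈ Ioi x, 0 ≤ g t :=
    fun x hx t ht => (ha t (hx.trans (le_of_lt ht))).2
  have hG0' : Tendsto (fun y => -G y) atTop (𝓝 0) := by simpa only [neg_zero] using hG0.neg
  refine ⟨⟨Ioi a, Ioi_mem_atTop a,
    integrableOn_Ioi_deriv_of_nonneg' (hderiv a le_rfl) (hnonneg a le_rfl) hG0'⟩, ?_⟩
  filter_upwards [eventually_ge_atTop a] with x hx
  rw [integral_Ioi_of_hasDerivAt_of_nonneg' (hderiv x hx) (hnonneg x hx) hG0', zero_sub, neg_neg]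

section cdfOf

variable {Ω : Type*} [MeasurableSpace Ω] {μ : Measure Ω} [IsProbabilityMeasure μ] {X : Ω → ℝ}
  {f : ℝ → ℝ}

theorem tendsto_cdfOf_atTop : Tendsto (cdfOf μ X) atTop (𝓝 1) := by
  have hmono : Monotone fun x : ℝ => {ω | X ω ≤ x} := fun x y hxy ω hω => le_trans hω hxy
  have hunion : ⋃ x : ℝ, {ω | X ω ≤ x} = univ :=
    iUnion_eq_univ_iff.2 fun ω => ⟨X ω, le_refl (X ω)⟩
  have h := tendsto_measure_iUnion_atTop (μ := μ) hmono
  rw [hunion, measure_univ] at h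
  exact (ENNReal.tendsto_toReal ENNReal.one_ne_top).comp h

theorem integrableOn_Iic_of_cdfOf_eq_integral (hpdf : ∀ x, cdfOf μ X x = ∫ t in Iic x, f t)
    (x : ℝ) : IntegrableOn f (Iic x) := by
  obtain ⟨y, hy_ne, hxy⟩ :=
    ((tendsto_cdfOf_atTop (μ := μ) (X := X)).eventually_ne one_ne_zero).and
      (eventually_ge_atTop x) |>.exists
  refine IntegrableOn.mono_set ?_ (Iic_subset_Iic.2 hxy)
  -- otherwise the integral is the junk value `0`, while the cdf tends to `1`
  by_contra hni
  exact hy_ne (by rw [hpdf, integral_undef hni])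

theorem integrable_of_cdfOf_eq_integral {g : ℝ → ℝ}
    (hpdf : ∀ x, cdfOf μ X x = ∫ t in Iic x, f t) (hfg : f =O[atTop] g)
    (hg : IntegrableAtFilter g atTop) : Integrable f := by
  have hmeas : AEStronglyMeasurable f := by
    rw [← Measure.restrict_univ (μ := volume), ← Real.iUnion_Iic_rat,
      aestronglyMeasurable_iUnion_iff]
    exact fun r => (integrableOn_Iic_of_cdfOf_eq_integral hpdf r).aestronglyMeasurable
  obtain ⟨a, ha⟩ := integrableAtFilter_atTop_iff.1
    (hfg.integrableAtFilter hmeas.stronglyMeasurableAtFilter hg)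
  rw [← integrableOn_univ, ← Iic_union_Ici (a := a)]
  exact (integrableOn_Iic_of_cdfOf_eq_integral hpdf a).union ha

theorem one_sub_cdfOf_eq_integral_Ioi (hpdf : ∀ x, cdfOf μ X x = ∫ t in Iic x, f t)
    (hf : Integrable f) (x : ℝ) : 1 - cdfOf μ X x = ∫ t in Ioi x, f t := by
  have h_total : ∫ t, f t = 1 := by
    have h := tendsto_setIntegral_of_monotone (fun y => measurableSet_Iic)
      (fun _ _ hyz => Iic_subset_Iic.2 hyz) hf.integrableOn
    rw [iUnion_Iic, setIntegral_univ] at h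
    exact tendsto_nhds_unique (h.congr fun y => (hpdf y).symm) tendsto_cdfOf_atTop
  rw [← h_total, ← intervalIntegral.integral_Iic_add_Ioi hf.integrableOn hf.integrableOn, hpdf,
    add_sub_cancel_left]

end cdfOf

section StretchedExp

variable {α β lam γ : ℝ}

theorem tendsto_rpow_mul_exp_neg_mul_rpow_atTop_nhds_zero (hlam : 0 < lam) (hγ : 0 < γ) (s : ℝ) :
    Tendsto (fun x : ℝ => x ^ s * Real.exp (-lam * x ^ γ)) atTop (𝓝 0) := by
  refine ((tendsto_rpow_mul_exp_neg_mul_atTop_nhds_zero (s / γ) lam hlam).comp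
    (tendsto_rpow_atTop hγ)).congr' ?_
  filter_upwards [eventually_gt_atTop 0] with x hx
  rw [Function.comp_apply, ← Real.rpow_mul hx.le, mul_div_cancel₀ s hγ.ne']

theorem hasDerivAt_mul_rpow_mul_exp_neg_mul_rpow {t : ℝ} (ht : 0 < t) :
    HasDerivAt (fun y => α * y ^ β * Real.exp (-lam * y ^ γ))
      (-(α * t ^ (β - 1) * Real.exp (-lam * t ^ γ) * (γ * lam * t ^ γ - β))) t := by
  have hpow : ∀ p : ℝ, HasDerivAt (fun y : ℝ => y ^ p) (p * t ^ (p - 1)) t :=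
    fun p => Real.hasDerivAt_rpow_const (Or.inl ht.ne')
  refine (((hpow β).const_mul α).mul (((hpow γ).const_mul (-lam)).exp)).congr_deriv ?_
  rw [Real.rpow_sub_one ht.ne', Real.rpow_sub_one ht.ne']
  field_simp
  ring

theorem eventually_nonneg_stretchedExp_density (hα : 0 ≤ α) (hlam : 0 < lam) (hγ : 0 < γ) :
    ∀ᶠ t in atTop, 0 ≤ α * t ^ (β - 1) * Real.exp (-lam * t ^ γ) * (γ * lam * t ^ γ - β) := by
  filter_upwards [eventually_gt_atTop 0, ((tendsto_rpow_atTop hγ).const_mul_atTop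
    (mul_pos hγ hlam)).eventually_ge_atTop β] with t ht hβ
  have := sub_nonneg.2 hβ
  positivity

theorem isEquivalent_stretchedExp_density (hlam : 0 < lam) (hγ : 0 < γ) :
    (fun t => α * γ * lam * t ^ (β + γ - 1) * Real.exp (-lam * t ^ γ)) ~[atTop]
      fun t => α * t ^ (β - 1) * Real.exp (-lam * t ^ γ) * (γ * lam * t ^ γ - β) := by
  have hpoly : (fun t => γ * lam * t ^ γ) ~[atTop] fun t => γ * lam * t ^ γ - β := by
    have hinf : Tendsto (fun t => γ * lam * t ^ γ) atTop atTop :=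
      (tendsto_rpow_atTop hγ).const_mul_atTop (mul_pos hγ hlam)
    have hconst : (fun _ => -β) =o[atTop] fun t => γ * lam * t ^ γ :=
      isLittleO_const_left.2 (Or.inr (tendsto_norm_atTop_atTop.comp hinf))
    refine (hconst.add_isEquivalent IsEquivalent.refl).symm.congr_right ?_
    exact Eventually.of_forall fun t => by simp only [Pi.add_apply]; ring
  refine (IsEquivalent.refl.mul hpoly).congr_left ?_
  filter_upwards [eventually_gt_atTop 0] with t ht
  rw [Pi.mul_apply, show β + γ - 1 = (β - 1) + γ by ring, Real.rpow_add ht]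
  ring

end StretchedExp

theorem stmt_12_general {Ω : Type*} [MeasurableSpace Ω] (μ : Measure Ω) [IsProbabilityMeasure μ]
    (X : Ω → ℝ)
    (f : ℝ → ℝ)
    (hpdf : ∀ x, cdfOf μ X x = ∫ t in Set.Iic x, f t)
    (α β lam γ : ℝ) (hα : 0 < α) (hlam : 0 < lam) (hγ : 0 < γ)
    (hf : Tendsto (fun x : ℝ => f x /
        (α * γ * lam * x ^ (β + γ - 1) * Real.exp (-lam * x ^ γ))) atTop (nhds 1)) :
    ExpDomTail (cdfOf μ X) α β lam γ := by
  have hg_nonneg := eventually_nonneg_stretchedExp_density (β := β) hα.le hlam hγ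
  have hG0 : Tendsto (fun x => α * x ^ β * Real.exp (-lam * x ^ γ)) atTop (𝓝 0) := by
    simpa only [mul_zero, mul_assoc] using
      (tendsto_rpow_mul_exp_neg_mul_rpow_atTop_nhds_zero hlam hγ β).const_mul α
  obtain ⟨hg_int, hg_tail⟩ := integrableAtFilter_and_integral_Ioi_eq_of_hasDerivAt_neg
    ((eventually_gt_atTop 0).mono fun t ht => hasDerivAt_mul_rpow_mul_exp_neg_mul_rpow ht)
    hg_nonneg hG0
  have hfg := (isEquivalent_of_tendsto_one hf).trans (isEquivalent_stretchedExp_density hlam hγ)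
  have hf_int := integrable_of_cdfOf_eq_integral hpdf hfg.isBigO hg_int
  have htail : (fun x => 1 - cdfOf μ X x) ~[atTop] fun x => α * x ^ β * Real.exp (-lam * x ^ γ) :=
    ((hfg.integral_Ioi hg_nonneg (hf_int.integrableAtFilter _) hg_int).congr_left
      (Eventually.of_forall fun x => (one_sub_cdfOf_eq_integral_Ioi hpdf hf_int x).symm)
      ).congr_right hg_tail
  refine (isEquivalent_iff_tendsto_one ?_).1 htail
  filter_upwards [eventually_gt_atTop 0] with x hx
  positivity

/-- if the pdf of a positive random variable `X` satisfies
`f(x)/(αγλ x^{β+γ-1} e^{-λx^γ}) → 1`, then `X` has an exponentially-dominated tail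
with parameters `(α, β, λ, γ)`. -/
theorem stmt_12 {Ω : Type*} [MeasurableSpace Ω] (μ : Measure Ω) [IsProbabilityMeasure μ]
    (X : Ω → ℝ) (hXmeas : Measurable X) (hXpos : ∀ ω, 0 < X ω)
    (f : ℝ → ℝ)
    (hpdf : ∀ x, cdfOf μ X x = ∫ t in Set.Iic x, f t)
    (α β lam γ : ℝ) (hα : 0 < α) (hlam : 0 < lam) (hγ : 0 < γ)
    (hf : Tendsto (fun x : ℝ => f x /
        (α * γ * lam * x ^ (β + γ - 1) * Real.exp (-lam * x ^ γ))) atTop (nhds 1)) :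
    ExpDomTail (cdfOf μ X) α β lam γ :=
  stmt_12_general μ X f hpdf α β lam γ hα hlam hγ hf
end

section
/- Let X be a random variable with an exponentially-dominated tail distribution with parameters (α, β, λ, γ). Then lim_{p→0⁺} q̄_X(p) / [(1/λ)·ln(α/p)]^{1/γ} = 1, where q̄_X is the tail quantile function of X. -/
open MeasureTheory ProbabilityTheory Filter

/-- Tail quantile function `q̄_F(p) = min {x | F x ≥ 1 - p}` (as an infimum). -/
noncomputable def tailQuantile (F : ℝ → ℝ) (p : ℝ) : ℝ := sInf {x | 1 - p ≤ F x}

/-!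
Writing `1 - F x = R x · α x^β e^{-λ x^γ}` with `R x → 1`, one gets
`(1/λ) log (α / (1 - F x)) = x^γ (1 - u x)` where `u x = (log R x + β log x) / (λ x^γ) → 0`,
so `x / [(1/λ) log (α / (1 - F x))]^{1/γ} → 1` as `x → ∞`. Since `F` is continuous and
monotone, `1 - F (q̄ p) = p` and `q̄ p → ∞` as `p → 0⁺`; substituting `x = q̄ p` gives the claim.
-/

open Real Topology

noncomputable def expTail (α β lam γ x : ℝ) : ℝ := α * x ^ β * exp (-lam * x ^ γ)

section ExpTail

variable {α β lam γ : ℝ}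

lemma expTail_pos (hα : 0 < α) {x : ℝ} (hx : 0 < x) : 0 < expTail α β lam γ x := by
  have := rpow_pos_of_pos hx β
  unfold expTail
  positivity

lemma tendsto_expTail_atTop (α β : ℝ) (hlam : 0 < lam) (hγ : 0 < γ) :
    Tendsto (expTail α β lam γ) atTop (𝓝 0) := by
  have h := ((tendsto_rpow_mul_exp_neg_mul_atTop_nhds_zero (β / γ) lam hlam).comp
    (tendsto_rpow_atTop hγ)).const_mul α
  rw [mul_zero] at h
  refine h.congr' ?_
  filter_upwards [eventually_gt_atTop 0] with x hx
  rw [Function.comp_apply, ← rpow_mul hx.le, mul_div_cancel₀ β hγ.ne', expTail, mul_assoc]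

lemma one_div_mul_log_div_mul_expTail (hα : 0 < α) (hlam : 0 < lam) {R x : ℝ}
    (hR : 0 < R) (hx : 0 < x) :
    1 / lam * log (α / (R * expTail α β lam γ x)) =
      x ^ γ * (1 - (log R + β * log x) / (lam * x ^ γ)) := by
  have hxγ := rpow_pos_of_pos hx γ
  have hxβ := rpow_pos_of_pos hx β
  rw [log_div hα.ne' (mul_pos hR (expTail_pos hα hx)).ne', expTail,
    log_mul hR.ne' (by positivity), log_mul (by positivity) (exp_ne_zero _),
    log_mul hα.ne' hxβ.ne', log_rpow hx, log_exp]
  field_simp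
  ring

lemma tendsto_log_add_mul_log_div_rpow {R : ℝ → ℝ} (hR : Tendsto R atTop (𝓝 1))
    (hlam : 0 < lam) (hγ : 0 < γ) :
    Tendsto (fun x => (log (R x) + β * log x) / (lam * x ^ γ)) atTop (𝓝 0) := by
  have hlogR : Tendsto (fun x => log (R x)) atTop (𝓝 0) := by
    simpa [Function.comp_def] using (continuousAt_log one_ne_zero).tendsto.comp hR
  have hinv : Tendsto (fun x : ℝ => (lam * x ^ γ)⁻¹) atTop (𝓝 0) :=
    ((tendsto_rpow_atTop hγ).const_mul_atTop hlam).inv_tendsto_atTop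
  have hlog : Tendsto (fun x : ℝ => log x / x ^ γ) atTop (𝓝 0) :=
    (isLittleO_log_rpow_atTop hγ).tendsto_div_nhds_zero
  have h := (hlogR.mul hinv).add (hlog.const_mul (β / lam))
  simp only [mul_zero, add_zero] at h
  refine h.congr' ?_
  filter_upwards [eventually_gt_atTop 0] with x hx
  have := rpow_pos_of_pos hx γ
  field_simp

theorem tendsto_div_rpow_log_of_tendsto_div_expTail {G : ℝ → ℝ} (hα : 0 < α) (hlam : 0 < lam)
    (hγ : 0 < γ) (hG : Tendsto (fun x => G x / expTail α β lam γ x) atTop (𝓝 1)) :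
    Tendsto (fun x => x / (1 / lam * log (α / G x)) ^ (1 / γ)) atTop (𝓝 1) := by
  set u := fun x => (log (G x / expTail α β lam γ x) + β * log x) / (lam * x ^ γ)
  have hu : Tendsto u atTop (𝓝 0) := tendsto_log_add_mul_log_div_rpow hG hlam hγ
  have hlim : Tendsto (fun x => ((1 - u x) ^ (1 / γ))⁻¹) atTop (𝓝 1) := by
    simpa using (((tendsto_const_nhds (x := (1 : ℝ))).sub hu).rpow_const
      (Or.inl (by norm_num))).inv₀ (by simp)
  refine hlim.congr' ?_
  filter_upwards [eventually_gt_atTop 0, hG.eventually (eventually_gt_nhds one_pos),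
    hu.eventually (eventually_lt_nhds one_pos)] with x hx hR hux
  have hlog : 1 / lam * log (α / G x) = x ^ γ * (1 - u x) := by
    have h := one_div_mul_log_div_mul_expTail (β := β) (γ := γ) hα hlam hR hx
    rwa [div_mul_cancel₀ _ (expTail_pos hα hx).ne'] at h
  rw [hlog, mul_rpow (rpow_pos_of_pos hx γ).le (by linarith), one_div γ, rpow_rpow_inv hx.le hγ.ne',
    div_mul_eq_div_div, div_self hx.ne', one_div]

end ExpTail

lemma monotone_cdfOf {Ω : Type*} [MeasurableSpace Ω] (μ : Measure Ω) [IsFiniteMeasure μ]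
    (X : Ω → ℝ) : Monotone (cdfOf μ X) := fun _ _ hab =>
  ENNReal.toReal_mono (measure_ne_top μ _) (measure_mono fun _ hω => le_trans hω hab)

section TailQuantile

variable {F : ℝ → ℝ} {p x₀ : ℝ}

lemma mem_lowerBounds_superlevel (hF : Monotone F) (hx₀ : F x₀ < 1 - p) :
    x₀ ∈ lowerBounds {x | 1 - p ≤ F x} :=
  fun _ hx => (hF.reflect_lt (hx₀.trans_le hx)).le

lemma le_tailQuantile (hF : Monotone F) (hx₀ : F x₀ < 1 - p)
    (hne : {x | 1 - p ≤ F x}.Nonempty) : x₀ ≤ tailQuantile F p :=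
  le_csInf hne (mem_lowerBounds_superlevel hF hx₀)

lemma apply_tailQuantile (hF : Continuous F) (hmono : Monotone F) (hx₀ : F x₀ < 1 - p)
    (hne : {x | 1 - p ≤ F x}.Nonempty) : F (tailQuantile F p) = 1 - p := by
  have hbdd : BddBelow {x | 1 - p ≤ F x} := ⟨x₀, mem_lowerBounds_superlevel hmono hx₀⟩
  refine le_antisymm ?_ ((isClosed_le continuous_const hF).csInf_mem hne hbdd)
  by_contra! hlt
  obtain ⟨y, hy, hFy⟩ := ((hF.tendsto _).eventually (lt_mem_nhds hlt)).exists_lt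
  exact (csInf_le hbdd hFy.le).not_gt hy

end TailQuantile

namespace ExpDomTail

variable {F : ℝ → ℝ} {α β lam γ : ℝ}

lemma tendsto_one_sub (h : ExpDomTail F α β lam γ) (hα : 0 < α) (hlam : 0 < lam) (hγ : 0 < γ) :
    Tendsto (fun x => 1 - F x) atTop (𝓝 0) := by
  have h0 := h.mul (tendsto_expTail_atTop α β hlam hγ)
  rw [mul_zero] at h0
  refine h0.congr' ?_
  filter_upwards [eventually_gt_atTop 0] with x hx
  exact div_mul_cancel₀ _ (expTail_pos hα hx).ne'

lemma eventually_one_sub_pos (h : ExpDomTail F α β lam γ) (hα : 0 < α) :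
    ∀ᶠ x in atTop, 0 < 1 - F x := by
  filter_upwards [eventually_gt_atTop 0, h.eventually (eventually_gt_nhds one_pos)] with x hx hR
  exact (div_pos_iff_of_pos_right (expTail_pos hα hx)).mp hR

lemma nonempty_superlevel (h : ExpDomTail F α β lam γ) (hα : 0 < α) (hlam : 0 < lam)
    (hγ : 0 < γ) {p : ℝ} (hp : 0 < p) : {x | 1 - p ≤ F x}.Nonempty := by
  obtain ⟨x, hx⟩ := ((h.tendsto_one_sub hα hlam hγ).eventually (eventually_lt_nhds hp)).exists
  exact ⟨x, show 1 - p ≤ F x by linarith⟩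

lemma tendsto_tailQuantile (h : ExpDomTail F α β lam γ) (hF : Monotone F) (hα : 0 < α)
    (hlam : 0 < lam) (hγ : 0 < γ) : Tendsto (tailQuantile F) (𝓝[>] 0) atTop := by
  refine tendsto_atTop.2 fun M => ?_
  obtain ⟨x₀, hx₀M, hx₀⟩ := ((eventually_ge_atTop M).and (h.eventually_one_sub_pos hα)).exists
  filter_upwards [Ioo_mem_nhdsGT hx₀] with p ⟨hp, hpx₀⟩
  exact hx₀M.trans (le_tailQuantile hF (by linarith) (h.nonempty_superlevel hα hlam hγ hp))

lemma eventually_one_sub_tailQuantile (h : ExpDomTail F α β lam γ) (hF : Continuous F)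
    (hmono : Monotone F) (hα : 0 < α) (hlam : 0 < lam) (hγ : 0 < γ) :
    ∀ᶠ p in 𝓝[>] 0, 1 - F (tailQuantile F p) = p := by
  obtain ⟨x₀, hx₀⟩ := (h.eventually_one_sub_pos hα).exists
  filter_upwards [Ioo_mem_nhdsGT hx₀] with p ⟨hp, hpx₀⟩
  rw [apply_tailQuantile hF hmono (x₀ := x₀) (by linarith) (h.nonempty_superlevel hα hlam hγ hp)]
  ring

end ExpDomTail

theorem stmt_14_general {Ω : Type*} [MeasurableSpace Ω] (μ : Measure Ω) [IsProbabilityMeasure μ]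
    (X : Ω → ℝ)
    (F : ℝ → ℝ) (hFdef : F = cdfOf μ X) (hFcont : Continuous F)
    (α β lam γ : ℝ) (hα : 0 < α) (hlam : 0 < lam) (hγ : 0 < γ)
    (htail : ExpDomTail F α β lam γ) :
    Tendsto (fun p : ℝ => tailQuantile F p / ((1 / lam) * Real.log (α / p)) ^ (1 / γ))
      (nhdsWithin 0 (Set.Ioi 0)) (nhds 1) := by
  have hmono : Monotone F := hFdef ▸ monotone_cdfOf μ X
  have hasymp := tendsto_div_rpow_log_of_tendsto_div_expTail hα hlam hγ htail
  refine (hasymp.comp (htail.tendsto_tailQuantile hmono hα hlam hγ)).congr' ?_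
  filter_upwards [htail.eventually_one_sub_tailQuantile hFcont hmono hα hlam hγ] with p hp
  rw [Function.comp_apply, hp]

/-- for a random variable with an exponentially-dominated tail (continuous CDF),
`q̄_X(p) / [(1/λ) ln(α/p)]^{1/γ} → 1` as `p → 0⁺`. -/
theorem stmt_14 {Ω : Type*} [MeasurableSpace Ω] (μ : Measure Ω) [IsProbabilityMeasure μ]
    (X : Ω → ℝ) (hXmeas : Measurable X)
    (F : ℝ → ℝ) (hFdef : F = cdfOf μ X) (hFcont : Continuous F)
    (α β lam γ : ℝ) (hα : 0 < α) (hlam : 0 < lam) (hγ : 0 < γ)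
    (htail : ExpDomTail F α β lam γ) :
    Tendsto (fun p : ℝ => tailQuantile F p / ((1 / lam) * Real.log (α / p)) ^ (1 / γ))
      (nhdsWithin 0 (Set.Ioi 0)) (nhds 1) :=
  stmt_14_general μ X F hFdef hFcont α β lam γ hα hlam hγ htail
end
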